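/- The Casimir operator of the sl₂-triple (H, X⁺, X⁻) with H = -E_x - p/2 + E_y + q/2, X⁺ = -(1/2)(Δ_x + r_y²), X⁻ = (1/2)(r_x² + Δ_y), namely Ω̂_{g'} = H² + 2(X⁺X⁻ + X⁻X⁺), satisfies the relation Ω̂_g = Ω̂_{g'} - (1/4)(p+q)² + (p+q), where Ω̂_g = (E_x - E_y)² + (p-q)(E_x - E_y) - 2(E_x + E_y) - (r_x²r_y² + r_x²Δ_x + r_y²Δ_y + Δ_xΔ_y) - pq. -/
import Mathlib


open MvPolynomial

noncomputable section

abbrev PolyPQ (p q : ℕ) := MvPolynomial (Fin p ⊕ Fin q) ℂ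

noncomputable def mulOp {p q : ℕ} (f : PolyPQ p q) : Module.End ℂ (PolyPQ p q) :=
  LinearMap.mulLeft ℂ f

noncomputable def DOp {p q : ℕ} (i : Fin p ⊕ Fin q) : Module.End ℂ (PolyPQ p q) :=
  (pderiv i).toLinearMap

noncomputable def Ex (p q : ℕ) : Module.End ℂ (PolyPQ p q) :=
  ∑ i : Fin p, mulOp (X (Sum.inl i)) * DOp (Sum.inl i)

noncomputable def Ey (p q : ℕ) : Module.End ℂ (PolyPQ p q) :=
  ∑ j : Fin q, mulOp (X (Sum.inr j)) * DOp (Sum.inr j)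

noncomputable def rx2 (p q : ℕ) : Module.End ℂ (PolyPQ p q) :=
  mulOp (∑ i : Fin p, X (Sum.inl i) ^ 2)

noncomputable def ry2 (p q : ℕ) : Module.End ℂ (PolyPQ p q) :=
  mulOp (∑ j : Fin q, X (Sum.inr j) ^ 2)

noncomputable def Dx (p q : ℕ) : Module.End ℂ (PolyPQ p q) :=
  ∑ i : Fin p, DOp (Sum.inl i) * DOp (Sum.inl i)

noncomputable def Dy (p q : ℕ) : Module.End ℂ (PolyPQ p q) :=
  ∑ j : Fin q, DOp (Sum.inr j) * DOp (Sum.inr j)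

noncomputable def Hop (p q : ℕ) : Module.End ℂ (PolyPQ p q) :=
  -Ex p q - ((p : ℂ) / 2) • 1 + Ey p q + ((q : ℂ) / 2) • 1

noncomputable def Xplus (p q : ℕ) : Module.End ℂ (PolyPQ p q) :=
  -((1 : ℂ) / 2) • (Dx p q + ry2 p q)

noncomputable def Xminus (p q : ℕ) : Module.End ℂ (PolyPQ p q) :=
  ((1 : ℂ) / 2) • (rx2 p q + Dy p q)

/-- Ω̂_g, the Casimir operator of g represented by differential operators. -/
noncomputable def OmegaG (p q : ℕ) : Module.End ℂ (PolyPQ p q) :=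
  (Ex p q - Ey p q) * (Ex p q - Ey p q) + ((p : ℂ) - (q : ℂ)) • (Ex p q - Ey p q) -
    (2 : ℂ) • (Ex p q + Ey p q) -
    (rx2 p q * ry2 p q + rx2 p q * Dx p q + ry2 p q * Dy p q + Dx p q * Dy p q) -
    ((p : ℂ) * (q : ℂ)) • 1

/-- Ω̂_{g'} = H² + 2(X⁺X⁻ + X⁻X⁺), the sl₂ Casimir operator. -/
noncomputable def OmegaSl2 (p q : ℕ) : Module.End ℂ (PolyPQ p q) :=
  Hop p q * Hop p q +
    (2 : ℂ) • (Xplus p q * Xminus p q + Xminus p q * Xplus p q)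


section Aux

lemma my_pderiv_comm {σ R : Type*} [CommSemiring R] (i j : σ) (f : MvPolynomial σ R) :
    pderiv i (pderiv j f) = pderiv j (pderiv i f) := by
  classical
  induction f using MvPolynomial.induction_on with
  | C a => simp
  | add f g hf hg => simp [hf, hg]
  | mul_X f k hf =>
    simp [pderiv_mul, hf, pderiv_X, Pi.single_apply]
    split_ifs <;> (try simp only [hf, map_zero, zero_add, add_zero]) <;> ring

lemma two_eq_C {p q : ℕ} : (2 : PolyPQ p q) = C 2 := (map_ofNat C 2).symm

lemma DOp_mulOp {p q : ℕ} (i : Fin p ⊕ Fin q) (f : PolyPQ p q) :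
    DOp i * mulOp f = mulOp f * DOp i + mulOp (pderiv i f) := by
  ext g
  simp [DOp, mulOp, pderiv_mul]
  ring

lemma DOp_DOp_comm {p q : ℕ} (i j : Fin p ⊕ Fin q) : DOp i * DOp j = DOp j * DOp i := by
  refine LinearMap.ext fun g => ?_
  exact my_pderiv_comm i j g

lemma mulOp_mulOp_comm {p q : ℕ} (f g : PolyPQ p q) : mulOp f * mulOp g = mulOp g * mulOp f := by
  ext h; simp [mulOp]; ring

lemma mulOp_smul {p q : ℕ} (c : ℂ) (f : PolyPQ p q) : mulOp (c • f) = c • mulOp f := by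
  ext g; simp [mulOp]

lemma mulOp_one {p q : ℕ} : mulOp (1 : PolyPQ p q) = 1 := LinearMap.mulLeft_one ℂ _

lemma mulOp_two {p q : ℕ} : mulOp (2 : PolyPQ p q) = (2:ℂ) • 1 := by
  rw [show (2 : PolyPQ p q) = (2:ℂ) • 1 by rw [smul_eq_C_mul, mul_one, two_eq_C],
    mulOp_smul, mulOp_one]

lemma sq_comm {p q : ℕ} (j : Fin p ⊕ Fin q) (s : PolyPQ p q) (hs : pderiv j s = 2 * X j) :
    DOp j * DOp j * mulOp s =
      mulOp s * (DOp j * DOp j) + (4:ℂ) • (mulOp (X j) * DOp j) + (2:ℂ) • 1 := by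
  have hA : mulOp ((2:PolyPQ p q) * X j) = (2:ℂ) • mulOp (X j) := by
    rw [show (2:PolyPQ p q) * X j = (2:ℂ) • X j by rw [smul_eq_C_mul, two_eq_C], mulOp_smul]
  have h1 : DOp j * mulOp s = mulOp s * DOp j + mulOp (2 * X j) := by
    rw [DOp_mulOp, hs]
  have h2 : DOp j * mulOp (2 * X j) = mulOp (2 * X j) * DOp j + (2:ℂ) • 1 := by
    rw [DOp_mulOp]
    congr 1
    rw [show pderiv j ((2:PolyPQ p q) * X j) = 2 by
      rw [two_eq_C, pderiv_C_mul, pderiv_X_self, mul_one], mulOp_two]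
  calc DOp j * DOp j * mulOp s = DOp j * (mulOp s * DOp j + mulOp (2 * X j)) := by
        rw [mul_assoc, h1]
    _ = (DOp j * mulOp s) * DOp j + DOp j * mulOp (2 * X j) := by
        rw [mul_add, mul_assoc]
    _ = (mulOp s * DOp j + mulOp (2 * X j)) * DOp j + (mulOp (2 * X j) * DOp j + (2:ℂ) • 1) := by
        rw [h1, h2]
    _ = mulOp s * (DOp j * DOp j) + (4:ℂ) • (mulOp (X j) * DOp j) + (2:ℂ) • 1 := by
        rw [hA]
        simp only [add_mul, smul_mul_assoc, mul_assoc]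
        module

lemma pderiv_sumsq_x {p q : ℕ} (i : Fin p) :
    pderiv (Sum.inl i) (∑ l : Fin p, (X (Sum.inl l) : PolyPQ p q) ^ 2) = 2 * X (Sum.inl i) := by
  classical
  rw [map_sum]
  simp [pderiv_pow, pderiv_X, Pi.single_apply, Finset.sum_ite_eq', mul_comm]

lemma pderiv_sumsq_y {p q : ℕ} (j : Fin q) :
    pderiv (Sum.inr j) (∑ l : Fin q, (X (Sum.inr l) : PolyPQ p q) ^ 2) = 2 * X (Sum.inr j) := by
  classical
  rw [map_sum]
  simp [pderiv_pow, pderiv_X, Pi.single_apply, Finset.sum_ite_eq', mul_comm]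

lemma Dx_rx2 (p q : ℕ) :
    Dx p q * rx2 p q = rx2 p q * Dx p q + (4:ℂ) • Ex p q + ((p:ℂ) * 2) • 1 := by
  unfold Dx rx2 Ex
  rw [Finset.sum_mul]
  rw [Finset.sum_congr rfl fun i _ => sq_comm (Sum.inl i) _ (pderiv_sumsq_x i)]
  rw [Finset.sum_add_distrib, Finset.sum_add_distrib, ← Finset.mul_sum, ← Finset.smul_sum,
    Finset.sum_const, Finset.card_univ, Fintype.card_fin]
  match_scalars <;> push_cast <;> ring

lemma Dy_ry2 (p q : ℕ) :
    Dy p q * ry2 p q = ry2 p q * Dy p q + (4:ℂ) • Ey p q + ((q:ℂ) * 2) • 1 := by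
  unfold Dy ry2 Ey
  rw [Finset.sum_mul]
  rw [Finset.sum_congr rfl fun j _ => sq_comm (Sum.inr j) _ (pderiv_sumsq_y j)]
  rw [Finset.sum_add_distrib, Finset.sum_add_distrib, ← Finset.mul_sum, ← Finset.smul_sum,
    Finset.sum_const, Finset.card_univ, Fintype.card_fin]
  match_scalars <;> push_cast <;> ring

lemma Dy_Dx (p q : ℕ) : Dy p q * Dx p q = Dx p q * Dy p q := by
  unfold Dx Dy
  refine Commute.sum_left _ _ _ fun j _ => Commute.sum_right _ _ _ fun i _ => ?_
  have c : ∀ (a b : Fin p ⊕ Fin q), Commute (DOp a : Module.End ℂ (PolyPQ p q)) (DOp b) :=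
    fun a b => DOp_DOp_comm a b
  exact ((c _ _).mul_left (c _ _)).mul_right (((c _ _).mul_left (c _ _)))

lemma ry2_rx2 (p q : ℕ) : ry2 p q * rx2 p q = rx2 p q * ry2 p q := by
  unfold rx2 ry2; exact mulOp_mulOp_comm _ _

end Aux

/-- Ω̂_g = Ω̂_{g'} - (1/4)(p+q)² + (p+q). -/
theorem casimir_relation (p q : ℕ) :
    OmegaG p q =
      OmegaSl2 p q - (((p : ℂ) + q) ^ 2 / 4) • 1 + ((p : ℂ) + q) • 1 := by
  have h1 := Dx_rx2 p q
  have h2 := Dy_ry2 p q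
  have h4 := Dy_Dx p q
  have h5 := ry2_rx2 p q
  simp only [OmegaG, OmegaSl2, Hop, Xplus, Xminus]
  simp only [smul_mul_assoc, mul_smul_comm, smul_smul, mul_add, add_mul, sub_mul, mul_sub,
    neg_mul, mul_neg, mul_one, one_mul, smul_add, smul_sub, smul_neg, neg_add, neg_neg, neg_sub]
  have e1 : (-Ex p q) * (-Ex p q) = Ex p q * Ex p q := by
    refine LinearMap.ext fun g => ?_; simp
  have e2 : Ey p q * (-Ex p q) = -(Ey p q * Ex p q) := by
    refine LinearMap.ext fun g => ?_; simp
  have e3 : (-Ex p q) * Ey p q = -(Ex p q * Ey p q) := by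
    refine LinearMap.ext fun g => ?_; simp
  rw [h1, h2, h4, h5, e1, e2, e3]
  match_scalars <;> ring
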